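/- Let H be a real Hilbert space, D ⊆ H a convex set with nonempty interior, and f : H → ℝ a lower-semicontinuous strictly convex function on D that is Gâteaux differentiable on the interior of D with Gâteaux gradient g. Let p ≥ 2, let A_1, …, A_p (indices modulo p) be nonempty, bounded, closed subsets of the interior of D with A_i convex for a given i, and let T : ∪_j A_j → ∪_j A_j satisfy T(A_j) ⊆ A_{j+1}. Assume the restricted composite map T^p : A_i → A_i is generalized point-dependent (1, λ_i)-hybrid relative to D_f, i.e., there is λ_i : A_i → ℝ with D_f(T^p x, T^p y) ≤ D_f(x,y) + λ_i(y) ⟪x − T^p x, g y − g(T^p y)⟫ for all x, y ∈ A_i. Fix x ∈ A_i such that the orbit (Tⁿ x) is bounded, and define the averages S_n^{(i)} x = (1/n) Σ_{k=0}^{n−1} T^{kp} x. Then every weak cluster point of the sequence (S_n^{(i)} x) is a fixed point of T^p lying in A_i. -/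

import Mathlib

/-!
Write `U = T^p`, `xₖ = U^k x` and fix `y ∈ A_i`. The three-point identity
`D(a, y) = D(a, U y) + D(U y, y) + ⟪a - U y, g (U y) - g y⟫` turns the hybrid inequality for
`(xₖ, y)` into `wₖ₊₁ - wₖ ≤ D(U y, y) + ⟪xₖ - U y, g (U y) - g y⟫`, where
`wₖ = D(xₖ, U y) + λ(y) ⟪xₖ, g y - g (U y)⟫` is bounded below. Averaging over `k < n` and letting
`n → ∞` along the weakly convergent subsequence of averages gives
`0 ≤ D(U y, y) + ⟪v - U y, g (U y) - g y⟫ = D(v, y) - D(v, U y)`. Since `A_i` is closed and convex,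
hence weakly closed, `v ∈ A_i`, and `y = v` yields `D(v, U v) ≤ 0`, which forces `U v = v` by strict
convexity of `f`.
-/

open Topology Filter Set Finset

theorem mapsTo_iterate_of_cyclic {α ι : Type*} [AddMonoidWithOne ι]
    {A : ι → Set α} {T : α → α} (hT : ∀ j, MapsTo T (A j) (A (j + 1))) (n : ℕ) (j : ι) :
    MapsTo T^[n] (A j) (A (j + n)) := by
  induction n with
  | zero => simpa using mapsTo_id (A j)
  | succ n ih =>
    rw [Function.iterate_succ', Nat.cast_succ, ← add_assoc]
    exact (hT _).comp ih

theorem nonneg_of_tendsto_average_of_sub_le {w r : ℕ → ℝ} (hw : BddBelow (range w))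
    (hwr : ∀ k, w (k + 1) - w k ≤ r k) {l : Filter ℕ} [l.NeBot] (hl : l ≤ atTop) {L : ℝ}
    (hL : Tendsto (fun n : ℕ => (n : ℝ)⁻¹ * ∑ k ∈ range n, r k) l (𝓝 L)) : 0 ≤ L := by
  obtain ⟨B, hB⟩ := hw
  have hlower : ∀ n : ℕ, 1 ≤ n → (B - w 0) * (n : ℝ)⁻¹ ≤ (n : ℝ)⁻¹ * ∑ k ∈ range n, r k := by
    intro n hn
    have hsum : w n - w 0 ≤ ∑ k ∈ range n, r k := by
      rw [← Finset.sum_range_sub]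
      exact Finset.sum_le_sum fun k _ => hwr k
    rw [mul_comm]
    gcongr
    linarith [hB ⟨n, rfl⟩]
  have hzero : Tendsto (fun n : ℕ => (B - w 0) * (n : ℝ)⁻¹) l (𝓝 0) := by
    simpa using (tendsto_inv_atTop_nhds_zero_nat.const_mul (B - w 0)).mono_left hl
  exact le_of_tendsto_of_tendsto hzero hL ((eventually_ge_atTop 1).filter_mono hl |>.mono hlower)

section Bregman

variable {H : Type*} [NormedAddCommGroup H] [InnerProductSpace ℝ H]

def HasGateauxGradientAt (f : H → ℝ) (f' x : H) : Prop :=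
  ∀ v : H, Tendsto (fun t : ℝ => (f (x + t • v) - f x) / t) (𝓝[≠] 0) (𝓝 (inner ℝ v f'))

def bregmanDist (f : H → ℝ) (g : H → H) (y x : H) : ℝ :=
  f y - f x - inner ℝ (y - x) (g x)

variable {D : Set H} {f : H → ℝ} {g : H → H} {a b : H}

theorem ConvexOn.inner_sub_le_of_hasGateauxGradientAt {f' : H} (hf : ConvexOn ℝ D f)
    (ha : a ∈ D) (hb : b ∈ D) (hg : HasGateauxGradientAt f f' b) :
    inner ℝ (a - b) f' ≤ f a - f b := by
  have hright : Tendsto (fun t : ℝ => (f (b + t • (a - b)) - f b) / t) (𝓝[>] 0)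
      (𝓝 (inner ℝ (a - b) f')) :=
    (hg (a - b)).mono_left (nhdsWithin_mono _ fun t ht => ne_of_gt ht)
  refine le_of_tendsto hright ?_
  filter_upwards [Ioo_mem_nhdsGT (zero_lt_one' ℝ)] with t ⟨ht₀, ht₁⟩
  have hconv : f ((1 - t) • b + t • a) ≤ (1 - t) * f b + t * f a :=
    hf.2 hb ha (by linarith) ht₀.le (by ring)
  have hpt : b + t • (a - b) = (1 - t) • b + t • a := by module
  rw [hpt, div_le_iff₀ ht₀]
  linarith

theorem ConvexOn.bregmanDist_nonneg (hf : ConvexOn ℝ D f) (ha : a ∈ D) (hb : b ∈ D)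
    (hg : HasGateauxGradientAt f (g b) b) : 0 ≤ bregmanDist f g a b := by
  have := hf.inner_sub_le_of_hasGateauxGradientAt ha hb hg
  unfold bregmanDist
  linarith

theorem StrictConvexOn.eq_of_bregmanDist_nonpos (hf : StrictConvexOn ℝ D f) (ha : a ∈ D)
    (hb : b ∈ D) (hg : HasGateauxGradientAt f (g b) b) (hab : bregmanDist f g a b ≤ 0) :
    a = b := by
  by_contra hne
  set m : H := (1 / 2 : ℝ) • a + (1 / 2 : ℝ) • b
  have hm : m ∈ D := hf.1 ha hb (by norm_num) (by norm_num) (by norm_num)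
  have hstrict : f m < 1 / 2 * f a + 1 / 2 * f b :=
    hf.2 ha hb hne (by norm_num) (by norm_num) (by norm_num)
  have hgrad := hf.convexOn.inner_sub_le_of_hasGateauxGradientAt hm hb hg
  rw [show m - b = (1 / 2 : ℝ) • (a - b) by module, real_inner_smul_left] at hgrad
  unfold bregmanDist at hab
  linarith

@[simp]
theorem bregmanDist_self (f : H → ℝ) (g : H → H) (a : H) : bregmanDist f g a a = 0 := by
  simp [bregmanDist]

theorem bregmanDist_three_point (f : H → ℝ) (g : H → H) (a y z : H) :
    bregmanDist f g a y =
      bregmanDist f g a z + bregmanDist f g z y + inner ℝ (a - z) (g z - g y) := by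
  simp only [bregmanDist, inner_sub_left, inner_sub_right]
  ring

/-- The generalized point-dependent `(1, λ)`-hybrid property of `U` on `C` relative to `D_f`. -/
def IsBregmanHybridOn (f : H → ℝ) (g : H → H) (lam : H → ℝ) (U : H → H) (C : Set H) : Prop :=
  ∀ x ∈ C, ∀ y ∈ C, bregmanDist f g (U x) (U y) ≤
    bregmanDist f g x y + lam y * inner ℝ (x - U x) (g y - g (U y))

theorem IsClosed.mem_of_tendsto_inner [CompleteSpace H] {C : Set H} (hC : IsClosed C)
    (hCc : Convex ℝ C) {α : Type*} {l : Filter α} [l.NeBot] {S : α → H} {v : H}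
    (hS : ∀ᶠ n in l, S n ∈ C)
    (hv : ∀ w, Tendsto (fun n => inner ℝ (S n) w) l (𝓝 (inner ℝ v w))) : v ∈ C := by
  by_contra hvC
  obtain ⟨F, u, hFC, huv⟩ := geometric_hahn_banach_closed_point hCc hC hvC
  obtain ⟨w, rfl⟩ := (InnerProductSpace.toDual ℝ H).surjective F
  simp only [InnerProductSpace.toDual_apply_apply, real_inner_comm _ w] at hFC huv
  have : inner ℝ v w ≤ u := le_of_tendsto (hv w) (hS.mono fun n hn => (hFC _ hn).le)
  linarith

theorem Convex.inv_natCast_smul_sum_mem {C : Set H} (hC : Convex ℝ C) {a : ℕ → H}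
    (ha : ∀ k, a k ∈ C) {n : ℕ} (hn : n ≠ 0) : (n : ℝ)⁻¹ • ∑ k ∈ range n, a k ∈ C := by
  rw [Finset.smul_sum]
  refine hC.sum_mem (fun _ _ => by positivity) ?_ fun k _ => ha k
  simp [hn]

variable {C : Set H} {lam : H → ℝ} {U : H → H} {x v y : H}

theorem IsBregmanHybridOn.bregmanDist_le_of_tendsto_average
    (hhyb : IsBregmanHybridOn f g lam U C)
    (hnonneg : ∀ a ∈ C, ∀ b ∈ C, 0 ≤ bregmanDist f g a b) (hU : MapsTo U C C)
    (hx : x ∈ C) (horb : Bornology.IsBounded (range fun k => U^[k] x))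
    {l : Filter ℕ} [l.NeBot] (hl : l ≤ atTop)
    (hv : ∀ w, Tendsto (fun n : ℕ => inner ℝ ((n : ℝ)⁻¹ • ∑ k ∈ range n, U^[k] x) w) l
      (𝓝 (inner ℝ v w)))
    (hy : y ∈ C) : bregmanDist f g v (U y) ≤ bregmanDist f g v y := by
  set z := U y
  set h := g z - g y
  set c := bregmanDist f g z y - inner ℝ z h
  have horbC : ∀ k, U^[k] x ∈ C := fun k => hU.iterate k hx
  obtain ⟨M, hM⟩ := isBounded_iff_forall_norm_le.mp horb
  set w : ℕ → ℝ := fun k => bregmanDist f g (U^[k] x) z + lam y * inner ℝ (U^[k] x) (g y - g z)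
  have hw : BddBelow (range w) := by
    refine ⟨-(|lam y| * (M * ‖g y - g z‖)), ?_⟩
    rintro _ ⟨k, rfl⟩
    have hinner : |lam y * inner ℝ (U^[k] x) (g y - g z)| ≤ |lam y| * (M * ‖g y - g z‖) := by
      rw [abs_mul]
      gcongr
      exact (abs_real_inner_le_norm _ _).trans (by gcongr; exact hM _ ⟨k, rfl⟩)
    linarith [hnonneg _ (horbC k) z (hU hy), neg_abs_le (lam y * inner ℝ (U^[k] x) (g y - g z))]
  have hstep : ∀ k, w (k + 1) - w k ≤ c + inner ℝ (U^[k] x) h := by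
    intro k
    have hk := hhyb _ (horbC k) y hy
    have h3 := bregmanDist_three_point f g (U^[k] x) y z
    rw [← Function.iterate_succ_apply' U k x] at hk
    simp only [w, c, h, inner_sub_left, inner_sub_right] at hk h3 ⊢
    linarith
  have havg : ∀ n : ℕ, n ≠ 0 → (n : ℝ)⁻¹ * ∑ k ∈ range n, (c + inner ℝ (U^[k] x) h) =
      c + inner ℝ ((n : ℝ)⁻¹ • ∑ k ∈ range n, U^[k] x) h := by
    intro n hn
    rw [Finset.sum_add_distrib, ← sum_inner, real_inner_smul_left, Finset.sum_const,
      Finset.card_range, nsmul_eq_mul]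
    field_simp
  have hlim : Tendsto (fun n : ℕ => (n : ℝ)⁻¹ * ∑ k ∈ range n, (c + inner ℝ (U^[k] x) h)) l
      (𝓝 (c + inner ℝ v h)) :=
    ((hv h).const_add c).congr' <|
      ((eventually_ne_atTop 0).filter_mono hl).mono fun n hn => (havg n hn).symm
  have h3 := bregmanDist_three_point f g v y z
  have := nonneg_of_tendsto_average_of_sub_le hw hstep hl hlim
  simp only [c, inner_sub_left] at this h3
  linarith

end Bregman

theorem weak_cluster_points_of_averages_are_fixed_points_general
    {H : Type*} [NormedAddCommGroup H] [InnerProductSpace ℝ H] [CompleteSpace H]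
    (D : Set H)
    (f : H → ℝ) (g : H → H)
    (hsc : StrictConvexOn ℝ D f)
    (hgat : ∀ x ∈ interior D, ∀ v : H,
      Tendsto (fun t : ℝ => (f (x + t • v) - f x) / t) (𝓝[≠] (0 : ℝ))
        (𝓝 (inner ℝ v (g x) : ℝ)))
    (Df : H → H → ℝ)
    (hDf : ∀ y x : H, Df y x = f y - f x - inner ℝ (y - x) (g x))
    (p : ℕ)
    (A : ZMod p → Set H)
    (hAcl : ∀ j, IsClosed (A j))
    (hAD : ∀ j, A j ⊆ interior D)
    (T : H → H)
    (hT : ∀ j, Set.MapsTo T (A j) (A (j + 1)))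
    (i : ZMod p) (hAicx : Convex ℝ (A i))
    (lam : H → ℝ)
    (hhyb : ∀ x ∈ A i, ∀ y ∈ A i,
      Df (T^[p] x) (T^[p] y) ≤ Df x y
        + lam y * inner ℝ (x - T^[p] x) (g y - g (T^[p] y)))
    (x : H) (hx : x ∈ A i)
    (horb : Bornology.IsBounded (Set.range fun n => T^[n] x))
    (S : ℕ → H)
    (hS : ∀ n : ℕ, S n = (n : ℝ)⁻¹ • ∑ k ∈ Finset.range n, T^[k * p] x) :
    ∀ v : H, (∃ φ : ℕ → ℕ, StrictMono φ ∧
        ∀ w : H, Tendsto (fun n => (inner ℝ (S (φ n)) w : ℝ)) atTop (𝓝 (inner ℝ v w : ℝ))) →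
      v ∈ A i ∧ T^[p] v = v := by
  rintro v ⟨φ, hφ, hweak⟩
  obtain rfl : Df = bregmanDist f g := funext₂ hDf
  have hAiD : A i ⊆ D := (hAD i).trans interior_subset
  have hgrad : ∀ y ∈ A i, HasGateauxGradientAt f (g y) y := fun y hy => hgat y (hAD i hy)
  have hU : MapsTo T^[p] (A i) (A i) := by
    simpa using mapsTo_iterate_of_cyclic hT p i
  have hiter : ∀ k, T^[k * p] = (T^[p])^[k] := fun k => by rw [mul_comm, Function.iterate_mul]
  simp only [hiter] at hS
  obtain rfl : S = _ := funext hS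
  have hl : map φ atTop ≤ atTop := hφ.tendsto_atTop
  have hv : ∀ w, Tendsto (fun n : ℕ => inner ℝ ((n : ℝ)⁻¹ • ∑ k ∈ range n, (T^[p])^[k] x) w)
      (map φ atTop) (𝓝 (inner ℝ v w)) := fun w => tendsto_map'_iff.mpr (hweak w)
  have hvA : v ∈ A i := (hAcl i).mem_of_tendsto_inner hAicx
    (((eventually_ne_atTop 0).filter_mono hl).mono fun n hn =>
      hAicx.inv_natCast_smul_sum_mem (fun k => hU.iterate k hx) hn) hv
  have horbU : Bornology.IsBounded (range fun k => (T^[p])^[k] x) :=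
    horb.subset (range_subset_iff.mpr fun k => ⟨p * k, congrFun (Function.iterate_mul T p k) x⟩)
  have hle := IsBregmanHybridOn.bregmanDist_le_of_tendsto_average hhyb
    (fun a ha b hb => hsc.convexOn.bregmanDist_nonneg (hAiD ha) (hAiD hb) (hgrad b hb)) hU hx
    horbU hl hv hvA
  rw [bregmanDist_self] at hle
  exact ⟨hvA, (hsc.eq_of_bregmanDist_nonpos (hAiD hvA) (hAiD (hU hvA)) (hgrad _ (hU hvA)) hle).symm⟩

/-- Theorem 2.6 (i): if the restricted composite map `T^p : A_i → A_i` of a `p`-cyclic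
self-mapping is generalized point-dependent `(1, λ_i)`-hybrid relative to the Bregman distance
and the orbit `(Tⁿ x)` of some `x ∈ A_i` is bounded, then every weak cluster point of the
averages `S_n^{(i)} x = (1/n) Σ_{k<n} T^{kp} x` is a fixed point of `T^p` lying in `A_i`. -/
theorem weak_cluster_points_of_averages_are_fixed_points
    {H : Type*} [NormedAddCommGroup H] [InnerProductSpace ℝ H] [CompleteSpace H]
    (D : Set H) (hD : Convex ℝ D) (hDint : (interior D).Nonempty)
    (f : H → ℝ) (g : H → H)
    (hlsc : LowerSemicontinuous f)
    (hsc : StrictConvexOn ℝ D f)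
    (hgat : ∀ x ∈ interior D, ∀ v : H,
      Tendsto (fun t : ℝ => (f (x + t • v) - f x) / t) (𝓝[≠] (0 : ℝ))
        (𝓝 (inner ℝ v (g x) : ℝ)))
    (Df : H → H → ℝ)
    (hDf : ∀ y x : H, Df y x = f y - f x - inner ℝ (y - x) (g x))
    (p : ℕ) (hp : 2 ≤ p)
    (A : ZMod p → Set H)
    (hAne : ∀ j, (A j).Nonempty)
    (hAbd : ∀ j, Bornology.IsBounded (A j))
    (hAcl : ∀ j, IsClosed (A j))
    (hAD : ∀ j, A j ⊆ interior D)
    (T : H → H)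
    (hT : ∀ j, Set.MapsTo T (A j) (A (j + 1)))
    (i : ZMod p) (hAicx : Convex ℝ (A i))
    (lam : H → ℝ)
    (hhyb : ∀ x ∈ A i, ∀ y ∈ A i,
      Df (T^[p] x) (T^[p] y) ≤ Df x y
        + lam y * inner ℝ (x - T^[p] x) (g y - g (T^[p] y)))
    (x : H) (hx : x ∈ A i)
    (horb : Bornology.IsBounded (Set.range fun n => T^[n] x))
    (S : ℕ → H)
    (hS : ∀ n : ℕ, S n = (n : ℝ)⁻¹ • ∑ k ∈ Finset.range n, T^[k * p] x) :
    ∀ v : H, (∃ φ : ℕ → ℕ, StrictMono φ ∧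
        ∀ w : H, Tendsto (fun n => (inner ℝ (S (φ n)) w : ℝ)) atTop (𝓝 (inner ℝ v w : ℝ))) →
      v ∈ A i ∧ T^[p] v = v :=
  weak_cluster_points_of_averages_are_fixed_points_general D f g hsc hgat Df hDf p A hAcl hAD T hT i
    hAicx lam hhyb x hx horb S hS
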